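/- Let g : ℝ → [0, ∞) be Lebesgue-integrable and let f_u : ℝ → [0, ∞) be nondecreasing and measurable. Define Φ(t) = ∫_{-∞}^{t} f_u(r) g(r) dr + ∫_{t}^{+∞} g(r) dr for t ∈ ℝ. If r₁ ∈ ℝ satisfies f_u(r₁) = 1, then Φ(r₁) ≤ Φ(t) for all t ∈ ℝ; that is, any solution of f_u(r) = 1 is a global minimizer of the parameterized Gallager first bound Φ. -/

import Mathlib

open MeasureTheory Set

/-! Write `Φ t = ∫ hₜ` with `hₜ = fᵤ g` on `(-∞, t]` and `hₜ = g` on `(t, ∞)`. Since `fᵤ` is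
nondecreasing and `fᵤ r₁ = 1`, `h_{r₁} = min (fᵤ, 1) · g` is the pointwise smallest of the
integrands `hₜ`, so `Φ r₁ ≤ Φ t` by monotonicity of the integral. -/

lemma piecewise_Iic_mul_le_of_eq_one {α : Type*} [LinearOrder α] {f g : α → ℝ}
    (hg_nonneg : ∀ r, 0 ≤ g r) (hf_mono : Monotone f) {r₁ : α} (hr₁ : f r₁ = 1) (t r : α) :
    (Iic r₁).piecewise (fun r => f r * g r) g r ≤ (Iic t).piecewise (fun r => f r * g r) g r := by
  simp only [piecewise, mem_Iic]
  have hg := hg_nonneg r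
  split_ifs with hr₁' ht
  · exact le_rfl
  · exact mul_le_of_le_one_left hg (hr₁ ▸ hf_mono hr₁')
  · exact le_mul_of_one_le_left hg (hr₁ ▸ hf_mono (le_of_not_ge hr₁'))
  · exact le_rfl

lemma integrableOn_Iic_mul_of_monotone {μ : Measure ℝ} {f g : ℝ → ℝ} (hg : Integrable g μ)
    (hf_meas : Measurable f) (hf_nonneg : ∀ r, 0 ≤ f r) (hf_mono : Monotone f) (t : ℝ) :
    IntegrableOn (fun r => f r * g r) (Iic t) μ := by
  refine hg.integrableOn.bdd_mul (c := f t) hf_meas.aestronglyMeasurable ?_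
  refine (ae_restrict_iff' measurableSet_Iic).2 (ae_of_all _ fun r hr => ?_)
  rw [Real.norm_of_nonneg (hf_nonneg r)]
  exact hf_mono hr

lemma setIntegral_Iic_add_setIntegral_Ioi {μ : Measure ℝ} {f g : ℝ → ℝ} {t : ℝ}
    (hf : IntegrableOn f (Iic t) μ) (hg : IntegrableOn g (Ioi t) μ) :
    (∫ r in Iic t, f r ∂μ) + ∫ r in Ioi t, g r ∂μ = ∫ r, (Iic t).piecewise f g r ∂μ := by
  rw [integral_piecewise measurableSet_Iic hf (by rwa [compl_Iic]), compl_Iic]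

theorem solution_of_fu_eq_one_minimizes_GFBT
    (g : ℝ → ℝ) (hg_nonneg : ∀ r, 0 ≤ g r) (hg_int : Integrable g)
    (fu : ℝ → ℝ) (hfu_nonneg : ∀ r, 0 ≤ fu r) (hfu_mono : Monotone fu)
    (hfu_meas : Measurable fu)
    (Φ : ℝ → ℝ)
    (hΦ : ∀ t, Φ t = (∫ r in Set.Iic t, fu r * g r) + ∫ r in Set.Ioi t, g r)
    (r₁ : ℝ) (hr₁ : fu r₁ = 1) :
    ∀ t : ℝ, Φ r₁ ≤ Φ t := by
  have hfg_int := integrableOn_Iic_mul_of_monotone hg_int hfu_meas hfu_nonneg hfu_mono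
  have hΦ_eq : ∀ t, Φ t = ∫ r, (Iic t).piecewise (fun r => fu r * g r) g r := fun t => by
    rw [hΦ, setIntegral_Iic_add_setIntegral_Ioi (hfg_int t) hg_int.integrableOn]
  have h_int : ∀ t, Integrable ((Iic t).piecewise (fun r => fu r * g r) g) := fun t =>
    Integrable.piecewise measurableSet_Iic (hfg_int t) hg_int.integrableOn
  intro t
  rw [hΦ_eq, hΦ_eq]
  exact integral_mono (h_int r₁) (h_int t)
    (piecewise_Iic_mul_le_of_eq_one hg_nonneg hfu_mono hr₁ t)
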